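/- Under the AMAFQI update with nonnegative, normalized, iteration-independent kernels, rewards 0 ≤ r^l ≤ R, and q̂_0^j ≡ 0, the sequence q̂_N^j(x,a) converges pointwise as N → ∞ to a unique limit q̂_{S_L}^j(x,a) satisfying q̂_{S_L}^j(x,a) ≤ R/(1−β); moreover, on a finite state–action space, for every ε > 0 there exists n(j) ∈ ℕ such that ‖q̂_N^j − q̂_{S_L}^j‖_∞ < ε for all N ≥ n(j). -/
import Mathlib


open Filter

/-- Auxiliary AMAFQI function `q̃` built from a fitted function `q`. -/
noncomputable def qtil {X A U : Type*} {L : ℕ} [Fintype A] [Nonempty A]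
    (Kbar : Fin L → X → U → ℝ) (rl : Fin L → ℝ) (β : ℝ) (xplus : Fin L → X)
    (q : X → A → ℝ) : X → U → ℝ :=
  fun x u => ∑ l, Kbar l x u * (rl l + β * ⨆ a' : A, q (xplus l) a')

/-- AMAFQI iterates `q̂_N` for a single agent `j`, with `ulj l = u^l(j)`. -/
noncomputable def qhat {X A U : Type*} {L : ℕ} [Fintype A] [Nonempty A]
    (K : Fin L → X → A → ℝ) (Kbar : Fin L → X → U → ℝ)
    (xl : Fin L → X) (ul : Fin L → U) (ulj : Fin L → A)
    (xplus : Fin L → X) (rl : Fin L → ℝ) (β : ℝ) : ℕ → X → A → ℝ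
  | 0 => fun _ _ => 0
  | N + 1 => fun x a => ∑ l, K l x a *
      max (qhat K Kbar xl ul ulj xplus rl β N (xl l) (ulj l))
        (qtil Kbar rl β xplus (qhat K Kbar xl ul ulj xplus rl β N) (xl l) (ul l))

/-- Theorem 2: the AMAFQI iterates converge pointwise to a unique limit bounded by
`R/(1-β)`, and the convergence is uniform on a finite state–action space. -/
theorem stmt4 {X A U : Type*} {L : ℕ} [Fintype X] [Fintype A] [Nonempty A]
    (K : Fin L → X → A → ℝ) (Kbar : Fin L → X → U → ℝ)
    (xl : Fin L → X) (ul : Fin L → U) (ulj : Fin L → A)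
    (xplus : Fin L → X) (rl : Fin L → ℝ) (β : ℝ) (R : ℝ)
    (hβ0 : 0 ≤ β) (hβ1 : β < 1)
    (hK : ∀ l x a, 0 ≤ K l x a) (hKn : ∀ x a, ∑ l, K l x a = 1)
    (hKbar : ∀ l x u, 0 ≤ Kbar l x u) (hKbarn : ∀ x u, ∑ l, Kbar l x u = 1)
    (hr : ∀ l, 0 ≤ rl l) (hrR : ∀ l, rl l ≤ R) :
    ∃ qlim : X → A → ℝ,
      (∀ x a, Tendsto (fun N => qhat K Kbar xl ul ulj xplus rl β N x a) atTop
        (nhds (qlim x a))) ∧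
      (∀ qlim' : X → A → ℝ,
        (∀ x a, Tendsto (fun N => qhat K Kbar xl ul ulj xplus rl β N x a) atTop
          (nhds (qlim' x a))) → qlim' = qlim) ∧
      (∀ x a, qlim x a ≤ R / (1 - β)) ∧
      ∀ ε > (0 : ℝ), ∃ n : ℕ, ∀ N ≥ n, ∀ x a,
        |qhat K Kbar xl ul ulj xplus rl β N x a - qlim x a| < ε := by
  rcases isEmpty_or_nonempty X with hX | hX
  · refine ⟨fun x _ => isEmptyElim x, fun x => isEmptyElim x,
      fun q' _ => funext fun x => isEmptyElim x, fun x => isEmptyElim x,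
      fun ε _ => ⟨0, fun N _ x => isEmptyElim x⟩⟩
  set Q := qhat K Kbar xl ul ulj xplus rl β with hQ
  obtain ⟨x0⟩ := hX
  obtain ⟨a0⟩ := (inferInstance : Nonempty A)
  have hL : Nonempty (Fin L) := by
    rcases isEmpty_or_nonempty (Fin L) with h | h
    · have := hKn x0 a0
      simp [Finset.univ_eq_empty] at this
    · exact h
  obtain ⟨l0⟩ := hL
  have hR0 : 0 ≤ R := le_trans (hr l0) (hrR l0)
  have h1β : (0:ℝ) < 1 - β := by linarith
  have hRb : 0 ≤ R / (1 - β) := div_nonneg hR0 h1β.le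
  have key : R + β * (R / (1 - β)) = R / (1 - β) := by field_simp; ring
  have hbdd : ∀ N x a, 0 ≤ Q N x a ∧ Q N x a ≤ R / (1 - β) := by
    intro N
    induction N with
    | zero => intro x a; exact ⟨le_refl 0, hRb⟩
    | succ N ih =>
      have hsup_le : ∀ x' : X, (⨆ a' : A, Q N x' a') ≤ R / (1 - β) :=
        fun x' => ciSup_le fun a' => (ih x' a').2
      have hsup_nonneg : ∀ x' : X, 0 ≤ ⨆ a' : A, Q N x' a' := fun x' =>
        le_trans (ih x' a0).1 (le_ciSup (Set.finite_range _).bddAbove a0)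
      have hqtil : ∀ x' u', qtil Kbar rl β xplus (Q N) x' u' ≤ R / (1 - β) := by
        intro x' u'
        calc qtil Kbar rl β xplus (Q N) x' u'
            ≤ ∑ l, Kbar l x' u' * (R / (1 - β)) := by
              refine Finset.sum_le_sum fun l _ => ?_
              refine mul_le_mul_of_nonneg_left ?_ (hKbar l x' u')
              calc rl l + β * ⨆ a' : A, Q N (xplus l) a'
                  ≤ R + β * (R / (1 - β)) := by
                    have := mul_le_mul_of_nonneg_left (hsup_le (xplus l)) hβ0
                    linarith [hrR l]
                _ = R / (1 - β) := key
          _ = R / (1 - β) := by rw [← Finset.sum_mul, hKbarn x' u', one_mul]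
      have hqtil0 : ∀ x' u', 0 ≤ qtil Kbar rl β xplus (Q N) x' u' := by
        intro x' u'
        refine Finset.sum_nonneg fun l _ => mul_nonneg (hKbar l x' u') ?_
        have := mul_nonneg hβ0 (hsup_nonneg (xplus l))
        linarith [hr l]
      intro x a
      have hq : Q (N+1) x a = ∑ l, K l x a *
          max (Q N (xl l) (ulj l)) (qtil Kbar rl β xplus (Q N) (xl l) (ul l)) := rfl
      constructor
      · rw [hq]
        refine Finset.sum_nonneg fun l _ => mul_nonneg (hK l x a) ?_
        exact le_trans (ih (xl l) (ulj l)).1 (le_max_left _ _)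
      · rw [hq]
        calc ∑ l, K l x a * max (Q N (xl l) (ulj l))
              (qtil Kbar rl β xplus (Q N) (xl l) (ul l))
            ≤ ∑ l, K l x a * (R / (1 - β)) := by
              refine Finset.sum_le_sum fun l _ => ?_
              exact mul_le_mul_of_nonneg_left
                (max_le (ih (xl l) (ulj l)).2 (hqtil (xl l) (ul l))) (hK l x a)
          _ = R / (1 - β) := by rw [← Finset.sum_mul, hKn x a, one_mul]
  have hmono : ∀ N x a, Q N x a ≤ Q (N+1) x a := by
    intro N
    induction N with
    | zero => intro x a; exact (hbdd 1 x a).1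
    | succ N ih =>
      intro x a
      have hq1 : Q (N+1) x a = ∑ l, K l x a *
          max (Q N (xl l) (ulj l)) (qtil Kbar rl β xplus (Q N) (xl l) (ul l)) := rfl
      have hq2 : Q (N+2) x a = ∑ l, K l x a *
          max (Q (N+1) (xl l) (ulj l))
            (qtil Kbar rl β xplus (Q (N+1)) (xl l) (ul l)) := rfl
      rw [hq1, hq2]
      refine Finset.sum_le_sum fun l _ => ?_
      refine mul_le_mul_of_nonneg_left (max_le_max (ih (xl l) (ulj l)) ?_) (hK l x a)
      refine Finset.sum_le_sum fun m _ => ?_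
      refine mul_le_mul_of_nonneg_left ?_ (hKbar m (xl l) (ul l))
      have hsup : (⨆ a' : A, Q N (xplus m) a') ≤ ⨆ a' : A, Q (N+1) (xplus m) a' :=
        ciSup_mono (Set.finite_range _).bddAbove fun a' => ih (xplus m) a'
      have := mul_le_mul_of_nonneg_left hsup hβ0
      linarith
  have hmono' : ∀ x a, Monotone fun N => Q N x a :=
    fun x a => monotone_nat_of_le_succ fun N => hmono N x a
  have hbdda : ∀ x a, BddAbove (Set.range fun N => Q N x a) := by
    intro x a
    refine ⟨R / (1 - β), ?_⟩
    rintro y ⟨N, rfl⟩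
    exact (hbdd N x a).2
  refine ⟨fun x a => ⨆ N, Q N x a, ?_, ?_, ?_, ?_⟩
  · exact fun x a => tendsto_atTop_ciSup (hmono' x a) (hbdda x a)
  · intro q' h
    funext x a
    exact tendsto_nhds_unique (h x a)
      (tendsto_atTop_ciSup (hmono' x a) (hbdda x a))
  · exact fun x a => ciSup_le fun N => (hbdd N x a).2
  · intro ε hε
    have h : ∀ p : X × A, ∃ n, ∀ N ≥ n, |Q N p.1 p.2 - ⨆ M, Q M p.1 p.2| < ε := by
      intro p
      obtain ⟨n, hn⟩ := (Metric.tendsto_atTop.mp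
        (tendsto_atTop_ciSup (hmono' p.1 p.2) (hbdda p.1 p.2))) ε hε
      exact ⟨n, fun N hN => by simpa [Real.dist_eq] using hn N hN⟩
    choose n hn using h
    refine ⟨Finset.univ.sup n, fun N hN x a => ?_⟩
    exact hn (x, a) N (le_trans (Finset.le_sup (Finset.mem_univ (x, a))) hN)
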